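/- Let Φ denote the standard normal CDF. For every α ∈ (0, 0.25) and every ψ ∈ [1/2, 0.9], writing c̄ = Φ^{-1}(1 − ψα) and c̃ = Φ^{-1}(1 − α + Φ(−c̄)), one has c̃ + c̄ < 2Φ^{-1}(1 − α/4). (Equivalently, the critical value ψ* at which c̃ + c̄ = 2Φ^{-1}(1 − α/4) satisfies ψ* > 0.9 for all α ∈ (0, 0.25).) -/

import Mathlib

open MeasureTheory ProbabilityTheory

/-- The standard normal cumulative distribution function `Φ`. -/
noncomputable def Phi : ℝ → ℝ := fun x => ProbabilityTheory.cdf (gaussianReal 0 1) x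

/-- The inverse `Φ⁻¹` of the standard normal CDF (junk values off `(0,1)`). -/
noncomputable def PhiInv : ℝ → ℝ := Function.invFun Phi

/-!
The Gaussian tail `Q = 1 - Φ` is log-concave: `(log Q)'' = φ (t Q - φ) / Q²`, and `t Q(t) ≤ φ(t)`
because `∫ₜ^∞ s φ(s) ds = φ(t)`. Since `Q(c̃) = (1 - ψ) α` and `Q(c̄) = ψ α`, log-concavity at the
midpoint gives `Q((c̃ + c̄) / 2) ≥ α √(ψ (1 - ψ))`, and `ψ (1 - ψ) ≥ 0.09 > 1/16` on `[1/2, 0.9]`,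
so `Q((c̃ + c̄) / 2) > α / 4 = Q(Φ⁻¹(1 - α/4))`.
-/

open Set Filter
open scoped Topology

noncomputable def phi (t : ℝ) : ℝ := (Real.sqrt (2 * Real.pi))⁻¹ * Real.exp (-t ^ 2 / 2)

lemma gaussianPDFReal_zero_one : gaussianPDFReal 0 1 = phi := by
  funext x
  simp [gaussianPDFReal, phi]

lemma phi_pos (t : ℝ) : 0 < phi t := by
  rw [← gaussianPDFReal_zero_one]; exact gaussianPDFReal_pos 0 1 t one_ne_zero

lemma phi_neg (t : ℝ) : phi (-t) = phi t := by
  simp [phi]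

lemma continuous_phi : Continuous phi := by
  unfold phi; fun_prop

lemma integrable_phi : Integrable phi := by
  rw [← gaussianPDFReal_zero_one]; exact integrable_gaussianPDFReal 0 1

lemma integral_phi : ∫ t, phi t = 1 := by
  rw [← gaussianPDFReal_zero_one]; exact integral_gaussianPDFReal_eq_one 0 one_ne_zero

lemma hasDerivAt_phi (x : ℝ) : HasDerivAt phi (-x * phi x) x := by
  have h : HasDerivAt (fun t : ℝ => -t ^ 2 / 2) (-x) x :=
    ((hasDerivAt_pow 2 x).neg.div_const 2).congr_deriv (by push_cast; ring)
  refine (h.exp.const_mul (Real.sqrt (2 * Real.pi))⁻¹).congr_deriv ?_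
  simp only [phi]; ring

lemma tendsto_phi_atTop : Tendsto phi atTop (𝓝 0) := by
  have h : Tendsto (fun s : ℝ => -s ^ 2 / 2) atTop atBot :=
    (tendsto_neg_atTop_atBot.comp (tendsto_pow_atTop two_ne_zero)).atBot_div_const
      (by norm_num)
  have h' := (Real.tendsto_exp_atBot.comp h).const_mul (Real.sqrt (2 * Real.pi))⁻¹
  rwa [mul_zero] at h'

lemma integrable_id_mul_phi : Integrable (fun s => s * phi s) := by
  refine ((integrable_mul_exp_neg_mul_sq (b := (1/2 : ℝ)) (by norm_num)).const_mul
    (Real.sqrt (2 * Real.pi))⁻¹).congr (ae_of_all _ fun s => ?_)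
  simp only [phi]
  ring_nf

lemma integral_Ioi_id_mul_phi (t : ℝ) : ∫ s in Ioi t, s * phi s = phi t := by
  have hderiv (x : ℝ) (_ : x ∈ Ioi t) : HasDerivAt (fun s => -phi s) (x * phi x) x :=
    (hasDerivAt_phi x).neg.congr_deriv (by ring)
  simpa using integral_Ioi_of_hasDerivAt_of_tendsto continuous_phi.neg.continuousWithinAt
    hderiv integrable_id_mul_phi.integrableOn tendsto_phi_atTop.neg

lemma Phi_eq_integral (x : ℝ) : Phi x = ∫ t in Iic x, phi t := by
  rw [Phi, cdf_eq_real, measureReal_def, gaussianReal_apply_eq_integral _ one_ne_zero,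
    gaussianPDFReal_zero_one, ENNReal.toReal_ofReal]
  exact setIntegral_nonneg measurableSet_Iic fun t _ => (phi_pos t).le

lemma one_sub_Phi_eq_integral (x : ℝ) : 1 - Phi x = ∫ t in Ioi x, phi t := by
  have h := intervalIntegral.integral_Iic_add_Ioi (b := x) integrable_phi.integrableOn
    integrable_phi.integrableOn
  rw [integral_phi] at h
  rw [Phi_eq_integral]; linarith

lemma hasDerivAt_Phi (x : ℝ) : HasDerivAt Phi (phi x) x := by
  have hPhi : Phi = fun y => Phi 0 + ∫ t in (0 : ℝ)..y, phi t := by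
    funext y
    rw [Phi_eq_integral, Phi_eq_integral, ← intervalIntegral.integral_Iic_sub_Iic
      integrable_phi.integrableOn integrable_phi.integrableOn]
    ring
  rw [hPhi]
  exact (intervalIntegral.integral_hasDerivAt_right integrable_phi.intervalIntegrable
    continuous_phi.stronglyMeasurable.stronglyMeasurableAtFilter
    continuous_phi.continuousAt).const_add (Phi 0)

lemma continuous_Phi : Continuous Phi :=
  continuous_iff_continuousAt.2 fun x => (hasDerivAt_Phi x).continuousAt

lemma Phi_strictMono : StrictMono Phi :=
  strictMono_of_deriv_pos fun x => by rw [(hasDerivAt_Phi x).deriv]; exact phi_pos x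

lemma Phi_neg (x : ℝ) : Phi (-x) = 1 - Phi x := by
  rw [one_sub_Phi_eq_integral, Phi_eq_integral, ← integral_comp_neg_Ioi]
  simp only [phi_neg]

lemma Phi_pos (x : ℝ) : 0 < Phi x :=
  (cdf_nonneg _ (x - 1)).trans_lt (Phi_strictMono (sub_one_lt x))

lemma Phi_lt_one (x : ℝ) : Phi x < 1 := by
  linarith [Phi_pos (-x), Phi_neg x]

lemma Phi_PhiInv {p : ℝ} (h0 : 0 < p) (h1 : p < 1) : Phi (PhiInv p) = p := by
  obtain ⟨a, ha⟩ := ((tendsto_cdf_atBot (gaussianReal 0 1)).eventually_lt_const h0).exists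
  obtain ⟨b, hb⟩ := ((tendsto_cdf_atTop (gaussianReal 0 1)).eventually_const_lt h1).exists
  have hab : a ≤ b := Phi_strictMono.le_iff_le.mp (by simp only [Phi]; linarith)
  obtain ⟨x, -, hx⟩ := intermediate_value_Icc hab continuous_Phi.continuousOn
    (show p ∈ Icc (Phi a) (Phi b) from ⟨ha.le, hb.le⟩)
  exact Function.invFun_eq ⟨x, hx⟩

lemma mul_one_sub_Phi_le_phi (t : ℝ) : t * (1 - Phi t) ≤ phi t := by
  rw [one_sub_Phi_eq_integral, ← integral_Ioi_id_mul_phi t, ← integral_const_mul]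
  refine setIntegral_mono_on (integrable_phi.const_mul t).integrableOn
    integrable_id_mul_phi.integrableOn measurableSet_Ioi fun s hs => ?_
  exact mul_le_mul_of_nonneg_right (le_of_lt hs) (phi_pos s).le

lemma concaveOn_log_one_sub_Phi : ConcaveOn ℝ univ (fun t => Real.log (1 - Phi t)) := by
  have hQ (t : ℝ) : 0 < 1 - Phi t := sub_pos.2 (Phi_lt_one t)
  have hQ' (t : ℝ) : HasDerivAt (fun y => 1 - Phi y) (-phi t) t :=
    (hasDerivAt_Phi t).const_sub 1
  refine concaveOn_of_hasDerivWithinAt2_nonpos convex_univ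
    (f' := fun t => -phi t / (1 - Phi t))
    (f'' := fun t => (t * phi t * (1 - Phi t) - phi t * phi t) / (1 - Phi t) ^ 2)
    ((continuous_const.sub continuous_Phi).log fun t => (hQ t).ne').continuousOn
    (fun x _ => ((hQ' x).log (hQ x).ne').hasDerivWithinAt)
    (fun x _ => ?_) (fun x _ => ?_)
  · have hnum : HasDerivAt (fun t => -phi t) (x * phi x) x :=
      (hasDerivAt_phi x).neg.congr_deriv (by ring)
    refine ((hnum.div (hQ' x) (hQ x).ne').congr_deriv ?_).hasDerivWithinAt
    ring
  · refine div_nonpos_of_nonpos_of_nonneg ?_ (sq_nonneg _)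
    have h := mul_le_mul_of_nonneg_left (mul_one_sub_Phi_le_phi x) (phi_pos x).le
    nlinarith

lemma sqrt_mul_le_one_sub_Phi_midpoint (x y : ℝ) :
    Real.sqrt ((1 - Phi x) * (1 - Phi y)) ≤ 1 - Phi ((x + y) / 2) := by
  have hQ (t : ℝ) : 0 < 1 - Phi t := sub_pos.2 (Phi_lt_one t)
  have h := concaveOn_log_one_sub_Phi.2 (mem_univ x) (mem_univ y)
    (by norm_num : (0 : ℝ) ≤ 1 / 2) (by norm_num : (0 : ℝ) ≤ 1 / 2) (by norm_num)
  simp only [smul_eq_mul] at h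
  rw [show (x + y) / 2 = 1 / 2 * x + 1 / 2 * y by ring,
    ← Real.log_le_log_iff (Real.sqrt_pos.2 (mul_pos (hQ x) (hQ y))) (hQ _),
    Real.log_sqrt (mul_pos (hQ x) (hQ y)).le, Real.log_mul (hQ x).ne' (hQ y).ne']
  linarith

lemma PhiInv_add_PhiInv_lt_two_mul_PhiInv {a b p : ℝ} (ha : 0 < a) (ha' : a < 1)
    (hb : 0 < b) (hb' : b < 1) (hp : 0 < p) (hp' : p < 1) (h : p < Real.sqrt (a * b)) :
    PhiInv (1 - a) + PhiInv (1 - b) < 2 * PhiInv (1 - p) := by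
  have hQ (q : ℝ) (hq : 0 < q) (hq' : q < 1) : 1 - Phi (PhiInv (1 - q)) = q := by
    rw [Phi_PhiInv (by linarith) (by linarith)]; ring
  have hmid := sqrt_mul_le_one_sub_Phi_midpoint (PhiInv (1 - a)) (PhiInv (1 - b))
  rw [hQ a ha ha', hQ b hb hb'] at hmid
  have hlt : Phi ((PhiInv (1 - a) + PhiInv (1 - b)) / 2) < Phi (PhiInv (1 - p)) := by
    linarith [hQ p hp hp']
  linarith [Phi_strictMono.lt_iff_lt.mp hlt]

theorem ctil_add_cbar_lt_two_cquarter (α ψ : ℝ)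
    (hα : 0 < α) (hα' : α < 0.25) (hψ : 1/2 ≤ ψ) (hψ' : ψ ≤ 0.9) :
    PhiInv (1 - α + Phi (-PhiInv (1 - ψ * α))) + PhiInv (1 - ψ * α) <
      2 * PhiInv (1 - α / 4) := by
  norm_num at hα'
  have hb : 0 < ψ * α := by positivity
  have hb' : ψ * α < 1 := by nlinarith
  have ha : 0 < α - ψ * α := by nlinarith
  rw [Phi_neg, Phi_PhiInv (by linarith) (by linarith),
    show 1 - α + (1 - (1 - ψ * α)) = 1 - (α - ψ * α) by ring]
  refine PhiInv_add_PhiInv_lt_two_mul_PhiInv ha (by linarith) hb hb' (by positivity)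
    (by linarith) ?_
  rw [Real.lt_sqrt (by positivity)]
  nlinarith [mul_nonneg (sub_nonneg.2 hψ) (sub_nonneg.2 hψ'), mul_pos hα hα]
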